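/- arXiv:2206.03784 — 2 statements merged into one kernel-verified Lean document; each statement's English description precedes it below -/
import Mathlib

section
/- If h : ℝ → ℝ is strongly quasisymmetric (i.e., there exist constants C₁, C₂ > 0 such that |h(E)|/|h(I)| ≤ C₁(|E|/|I|)^{C₂} for every interval I ⊂ ℝ and every measurable subset E ⊂ I), then h is locally absolutely continuous. -/
open MeasureTheory Set

/-- `h` is strongly quasisymmetric with constants `C₁, C₂`:
for every bounded interval `I = [a,b]` and measurable `E ⊆ I`,
`|h(E)|/|h(I)| ≤ C₁ (|E|/|I|)^{C₂}`. -/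
def SQSWith (C₁ C₂ : ℝ) (h : ℝ → ℝ) : Prop :=
  ∀ a b : ℝ, a < b → ∀ E ⊆ Set.Icc a b, MeasurableSet E →
    (volume (h '' E)).toReal / (volume (h '' Set.Icc a b)).toReal ≤
      C₁ * ((volume E).toReal / (b - a)) ^ C₂

/-!
Cover the intervals `[sᵢ, tᵢ] ⊆ [a, b]` by their union `E`. The increments `h tᵢ - h sᵢ` are the
lengths of the disjoint intervals `h '' (sᵢ, tᵢ) ⊆ h '' E`, so their sum is at most `|h(E)|`, which
strong quasisymmetry bounds by `C₁ (h b - h a) (|E| / (b - a))^{C₂}`; since `|E| ≤ ∑ (tᵢ - sᵢ)` and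
`x ↦ x^{C₂}` is continuous at `0`, this is small once `∑ (tᵢ - sᵢ)` is.
-/

theorem Real.volume_real_iUnion_Icc_le {ι : Type*} [Fintype ι] {s t : ι → ℝ}
    (hst : ∀ i, s i ≤ t i) : volume.real (⋃ i, Icc (s i) (t i)) ≤ ∑ i, (t i - s i) :=
  (measureReal_iUnion_fintype_le _).trans_eq <|
    Finset.sum_congr rfl fun i _ => Real.volume_real_Icc_of_le (hst i)

theorem OrderIso.sum_sub_le_volume_real_image_iUnion_Icc {ι : Type*} [Fintype ι] (e : ℝ ≃o ℝ)
    {s t : ι → ℝ} (hst : ∀ i, s i ≤ t i)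
    (hdisj : Pairwise (Function.onFun Disjoint fun i => Ioo (s i) (t i))) :
    ∑ i, (e (t i) - e (s i)) ≤ volume.real (e '' ⋃ i, Icc (s i) (t i)) := by
  have hdisj' : Pairwise (Function.onFun Disjoint fun i => Ioo (e (s i)) (e (t i))) := fun i j hij => by
    simpa only [Function.onFun, ← e.image_Ioo, disjoint_image_iff e.injective] using hdisj hij
  have hsub : (⋃ i, Ioo (e (s i)) (e (t i))) ⊆ e '' ⋃ i, Icc (s i) (t i) := by
    simp only [image_iUnion, ← e.image_Ioo]
    exact iUnion_mono fun i => image_mono Ioo_subset_Icc_self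
  have hfin : volume (e '' ⋃ i, Icc (s i) (t i)) ≠ ⊤ :=
    ((isCompact_iUnion fun i => isCompact_Icc).image e.continuous).measure_lt_top.ne
  calc ∑ i, (e (t i) - e (s i)) = volume.real (⋃ i, Ioo (e (s i)) (e (t i))) := by
        rw [measureReal_iUnion_fintype hdisj' (fun i => measurableSet_Ioo)
          fun i => measure_Ioo_lt_top.ne]
        exact Finset.sum_congr rfl fun i _ =>
          (Real.volume_real_Ioo_of_le (e.monotone (hst i))).symm
    _ ≤ volume.real (e '' ⋃ i, Icc (s i) (t i)) := measureReal_mono hsub hfin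

theorem SQSWith.volume_real_image_le {C₁ C₂ : ℝ} {e : ℝ ≃o ℝ} (hsqs : SQSWith C₁ C₂ e)
    {a b : ℝ} (hab : a < b) {E : Set ℝ} (hE : E ⊆ Icc a b) (hEm : MeasurableSet E) :
    volume.real (e '' E) ≤ C₁ * (e b - e a) * (volume.real E / (b - a)) ^ C₂ := by
  have h := hsqs a b hab E hE hEm
  rw [e.image_Icc, Real.volume_Icc, ENNReal.toReal_ofReal (sub_nonneg.2 (e.monotone hab.le)),
    div_le_iff₀ (sub_pos.2 (e.strictMono hab))] at h
  exact h.trans_eq (mul_right_comm _ _ _)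

theorem exists_pos_forall_abs_lt_mul_rpow_lt (K : ℝ) {p : ℝ} (hp : 0 < p) {ε : ℝ} (hε : 0 < ε) :
    ∃ δ > 0, ∀ x : ℝ, |x| < δ → K * x ^ p < ε := by
  have hlim : Filter.Tendsto (fun x : ℝ => K * x ^ p) (nhds 0) (nhds 0) := by
    simpa [Real.zero_rpow hp.ne'] using
      ((Real.continuous_rpow_const hp.le).const_mul K).tendsto 0
  obtain ⟨δ, hδ, hball⟩ := Metric.eventually_nhds_iff.1 (hlim.eventually (gt_mem_nhds hε))
  exact ⟨δ, hδ, fun x hx => hball (by simpa using hx)⟩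

theorem sqs_locally_absolutely_continuous_general
    (h : ℝ → ℝ) (hmono : StrictMono h)
    (hsurj : Function.Surjective h)
    (C₁ C₂ : ℝ) (hC₂ : 0 < C₂) (hsqs : SQSWith C₁ C₂ h) :
    ∀ a b : ℝ, a < b → ∀ ε > 0, ∃ δ > 0, ∀ (n : ℕ) (s t : Fin n → ℝ),
      (∀ i, a ≤ s i ∧ s i < t i ∧ t i ≤ b) →
      (∀ i j, i ≠ j → Disjoint (Set.Ioo (s i) (t i)) (Set.Ioo (s j) (t j))) →
      (∑ i, (t i - s i)) < δ → (∑ i, (h (t i) - h (s i))) < ε := by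
  intro a b hab ε hε
  set e : ℝ ≃o ℝ := hmono.orderIsoOfSurjective h hsurj
  have hba : 0 < b - a := sub_pos.2 hab
  obtain ⟨δ, hδ, hsmall⟩ := exists_pos_forall_abs_lt_mul_rpow_lt (C₁ * (h b - h a)) hC₂ hε
  refine ⟨δ * (b - a), mul_pos hδ hba, fun n s t hst hdisj hsum => ?_⟩
  set E := ⋃ i, Icc (s i) (t i)
  have hE : E ⊆ Icc a b := iUnion_subset fun i => Icc_subset_Icc (hst i).1 (hst i).2.2
  have hEm : MeasurableSet E := MeasurableSet.iUnion fun i => measurableSet_Icc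
  have hvolE : volume.real E / (b - a) < δ := by
    rw [div_lt_iff₀ hba]
    exact (Real.volume_real_iUnion_Icc_le fun i => (hst i).2.1.le).trans_lt hsum
  calc ∑ i, (h (t i) - h (s i)) ≤ volume.real (h '' E) :=
        OrderIso.sum_sub_le_volume_real_image_iUnion_Icc e (fun i => (hst i).2.1.le) hdisj
    _ ≤ C₁ * (h b - h a) * (volume.real E / (b - a)) ^ C₂ :=
        SQSWith.volume_real_image_le (e := e) hsqs hab hE hEm
    _ < ε := hsmall _ (by rwa [abs_of_nonneg (by positivity)])

/-- A strongly quasisymmetric increasing homeomorphism of `ℝ` is locally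
absolutely continuous. -/
theorem sqs_locally_absolutely_continuous
    (h : ℝ → ℝ) (hmono : StrictMono h) (hcont : Continuous h)
    (hsurj : Function.Surjective h)
    (C₁ C₂ : ℝ) (hC₁ : 0 < C₁) (hC₂ : 0 < C₂) (hsqs : SQSWith C₁ C₂ h) :
    ∀ a b : ℝ, a < b → ∀ ε > 0, ∃ δ > 0, ∀ (n : ℕ) (s t : Fin n → ℝ),
      (∀ i, a ≤ s i ∧ s i < t i ∧ t i ≤ b) →
      (∀ i j, i ≠ j → Disjoint (Set.Ioo (s i) (t i)) (Set.Ioo (s j) (t j))) →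
      (∑ i, (t i - s i)) < δ → (∑ i, (h (t i) - h (s i))) < ε :=
  sqs_locally_absolutely_continuous_general h hmono hsurj C₁ C₂ hC₂ hsqs
end

section
/- Every strongly quasisymmetric homeomorphism of ℝ is quasisymmetric: if h is an increasing homeomorphism of ℝ satisfying |h(E)|/|h(I)| ≤ C₁(|E|/|I|)^{C₂} for all intervals I and measurable E ⊆ I, then there exists M ≥ 1 such that 1/M ≤ (h(x+t)-h(x))/(h(x)-h(x-t)) ≤ M for all x ∈ ℝ and t > 0. -/
open MeasureTheory Set

lemma sqs_image_Icc {h : ℝ → ℝ} (hmono : StrictMono h) (hsurj : Function.Surjective h)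
    (a b : ℝ) : h '' Set.Icc a b = Set.Icc (h a) (h b) := by
  have : h '' Set.Icc a b = (StrictMono.orderIsoOfSurjective h hmono hsurj) '' Set.Icc a b := rfl
  rw [this, OrderIso.image_Icc]; rfl

lemma sqs_vol_image {h : ℝ → ℝ} (hmono : StrictMono h) (hsurj : Function.Surjective h)
    {a b : ℝ} (hab : a ≤ b) : (volume (h '' Set.Icc a b)).toReal = h b - h a := by
  rw [sqs_image_Icc hmono hsurj, Real.volume_Icc, ENNReal.toReal_ofReal_eq_iff]
  linarith [hmono.le_iff_le.2 hab]

/-- key step: a δ-portion of an interval maps to at most half the image. -/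
lemma sqs_portion {h : ℝ → ℝ} (hmono : StrictMono h) (hsurj : Function.Surjective h)
    {C₁ C₂ : ℝ} (hsqs : SQSWith C₁ C₂ h)
    {δ : ℝ} (hδ : C₁ * δ ^ C₂ ≤ 1/2) (hC₂ : 0 < C₂) (hC₁ : 0 < C₁)
    {a b c d : ℝ} (hab : a < b) (hac : a ≤ c) (hcd : c ≤ d) (hdb : d ≤ b)
    (hlen : d - c ≤ δ * (b - a)) :
    h d - h c ≤ (1/2) * (h b - h a) := by
  have hba : (0:ℝ) < b - a := by linarith
  have hIm : (0:ℝ) < h b - h a := by have := hmono hab; linarith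
  have h1 := hsqs a b hab (Set.Icc c d) (Set.Icc_subset_Icc hac hdb) measurableSet_Icc
  rw [sqs_vol_image hmono hsurj hcd, sqs_vol_image hmono hsurj hab.le, Real.volume_Icc,
    ENNReal.toReal_ofReal (by linarith)] at h1
  have h2 : C₁ * ((d - c) / (b - a)) ^ C₂ ≤ C₁ * δ ^ C₂ := by
    apply mul_le_mul_of_nonneg_left _ hC₁.le
    apply Real.rpow_le_rpow (div_nonneg (by linarith) hba.le) _ hC₂.le
    rw [div_le_iff₀ hba]; linarith
  have h3 : (h d - h c) / (h b - h a) ≤ 1/2 := le_trans h1 (le_trans h2 hδ)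
  calc h d - h c = ((h d - h c) / (h b - h a)) * (h b - h a) := by field_simp
    _ ≤ (1/2) * (h b - h a) := by nlinarith

/-- iterated step, chipping δ-portions off the right end. -/
lemma sqs_leftchain {h : ℝ → ℝ} (hmono : StrictMono h) (hsurj : Function.Surjective h)
    {C₁ C₂ : ℝ} (hsqs : SQSWith C₁ C₂ h)
    {δ : ℝ} (hδ0 : 0 < δ) (hδ1 : δ < 1) (hδ : C₁ * δ ^ C₂ ≤ 1/2)
    (hC₂ : 0 < C₂) (hC₁ : 0 < C₁)
    {a b : ℝ} (hab : a < b) :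
    ∀ k : ℕ, (1/2:ℝ)^k * (h b - h a) ≤ h (a + (1-δ)^k * (b-a)) - h a := by
  have hba : (0:ℝ) < b - a := by linarith
  have hd1 : (0:ℝ) < 1 - δ := by linarith
  intro k; induction k with
  | zero => simp
  | succ k ih =>
    have hckpos : (0:ℝ) < (1-δ)^k * (b-a) := by positivity
    have hck : a < a + (1-δ)^k * (b-a) := by linarith
    have hmono' : (1-δ)^(k+1) ≤ (1-δ)^k :=
      pow_le_pow_of_le_one hd1.le (by linarith) (Nat.le_succ k)
    have hnn : (0:ℝ) ≤ (1-δ)^(k+1) * (b-a) := by positivity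
    have hstep := sqs_portion hmono hsurj hsqs hδ hC₂ hC₁ hck
      (show a ≤ a + (1-δ)^(k+1) * (b-a) by linarith)
      (show a + (1-δ)^(k+1) * (b-a) ≤ a + (1-δ)^k * (b-a) by nlinarith)
      (le_refl (a + (1-δ)^k * (b-a)))
      (show (a + (1-δ)^k * (b-a)) - (a + (1-δ)^(k+1) * (b-a))
          ≤ δ * ((a + (1-δ)^k * (b-a)) - a) by ring_nf; nlinarith [pow_succ (1-δ) k])
    have hps : (1/2:ℝ)^(k+1) * (h b - h a) = (1/2) * ((1/2)^k * (h b - h a)) := by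
      rw [pow_succ]; ring
    linarith

/-- iterated step, chipping δ-portions off the left end. -/
lemma sqs_rightchain {h : ℝ → ℝ} (hmono : StrictMono h) (hsurj : Function.Surjective h)
    {C₁ C₂ : ℝ} (hsqs : SQSWith C₁ C₂ h)
    {δ : ℝ} (hδ0 : 0 < δ) (hδ1 : δ < 1) (hδ : C₁ * δ ^ C₂ ≤ 1/2)
    (hC₂ : 0 < C₂) (hC₁ : 0 < C₁)
    {a b : ℝ} (hab : a < b) :
    ∀ k : ℕ, (1/2:ℝ)^k * (h b - h a) ≤ h b - h (b - (1-δ)^k * (b-a)) := by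
  have hba : (0:ℝ) < b - a := by linarith
  have hd1 : (0:ℝ) < 1 - δ := by linarith
  intro k; induction k with
  | zero => simp
  | succ k ih =>
    have hckpos : (0:ℝ) < (1-δ)^k * (b-a) := by positivity
    have hck : b - (1-δ)^k * (b-a) < b := by linarith
    have hmono' : (1-δ)^(k+1) ≤ (1-δ)^k :=
      pow_le_pow_of_le_one hd1.le (by linarith) (Nat.le_succ k)
    have hnn : (0:ℝ) ≤ (1-δ)^(k+1) * (b-a) := by positivity
    have hstep := sqs_portion hmono hsurj hsqs hδ hC₂ hC₁ hck
      (le_refl (b - (1-δ)^k * (b-a)))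
      (show b - (1-δ)^k * (b-a) ≤ b - (1-δ)^(k+1) * (b-a) by nlinarith)
      (show b - (1-δ)^(k+1) * (b-a) ≤ b by linarith)
      (show (b - (1-δ)^(k+1) * (b-a)) - (b - (1-δ)^k * (b-a))
          ≤ δ * (b - (b - (1-δ)^k * (b-a))) by ring_nf; nlinarith [pow_succ (1-δ) k])
    have hps : (1/2:ℝ)^(k+1) * (h b - h a) = (1/2) * ((1/2)^k * (h b - h a)) := by
      rw [pow_succ]; ring
    linarith

/-- Every strongly quasisymmetric increasing homeomorphism of `ℝ` is
quasisymmetric: it satisfies an `M`-condition. -/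
theorem sqs_is_quasisymmetric
    (h : ℝ → ℝ) (hmono : StrictMono h) (hcont : Continuous h)
    (hsurj : Function.Surjective h)
    (C₁ C₂ : ℝ) (hC₁ : 0 < C₁) (hC₂ : 0 < C₂) (hsqs : SQSWith C₁ C₂ h) :
    ∃ M : ℝ, 1 ≤ M ∧ ∀ x t : ℝ, 0 < t →
      1 / M ≤ (h (x + t) - h x) / (h x - h (x - t)) ∧
      (h (x + t) - h x) / (h x - h (x - t)) ≤ M := by
  -- choose δ
  set δ : ℝ := min (1/2) ((2*C₁)⁻¹ ^ (C₂⁻¹)) with hδdef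
  have hrpos : (0:ℝ) < (2*C₁)⁻¹ ^ (C₂⁻¹) :=
    Real.rpow_pos_of_pos (by positivity) _
  have hδ0 : 0 < δ := lt_min (by norm_num) hrpos
  have hδhalf : δ ≤ 1/2 := min_le_left _ _
  have hδ1 : δ < 1 := lt_of_le_of_lt hδhalf (by norm_num)
  have hδkey : C₁ * δ ^ C₂ ≤ 1/2 := by
    have h1 : δ ^ C₂ ≤ ((2*C₁)⁻¹ ^ (C₂⁻¹)) ^ C₂ :=
      Real.rpow_le_rpow hδ0.le (min_le_right _ _) hC₂.le
    have h2 : ((2*C₁)⁻¹ ^ (C₂⁻¹)) ^ C₂ = (2*C₁)⁻¹ := by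
      rw [← Real.rpow_mul (by positivity), inv_mul_cancel₀ hC₂.ne', Real.rpow_one]
    rw [h2] at h1
    calc C₁ * δ ^ C₂ ≤ C₁ * (2*C₁)⁻¹ := mul_le_mul_of_nonneg_left h1 hC₁.le
      _ = 1/2 := by field_simp
  -- choose n
  obtain ⟨n, hn⟩ := exists_pow_lt_of_lt_one (show (0:ℝ) < 1/2 by norm_num)
    (show 1 - δ < 1 by linarith)
  refine ⟨2^n, one_le_pow₀ one_le_two, fun x t ht => ?_⟩
  have hab : x - t < x + t := by linarith
  have hA : 0 < h x - h (x - t) := by have := hmono (show x - t < x by linarith); linarith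
  have hB : 0 < h (x + t) - h x := by have := hmono (show x < x + t by linarith); linarith
  have hpow2 : (0:ℝ) < (2:ℝ)^n := by positivity
  have hhalf : (0:ℝ) < (1/2:ℝ)^n := by positivity
  have hprod : (1/2:ℝ)^n * (2:ℝ)^n = 1 := by rw [← mul_pow]; norm_num
  have hnt : (1-δ)^n * t < (1/2) * t := mul_lt_mul_of_pos_right hn ht
  -- left bound
  have hL := sqs_leftchain hmono hsurj hsqs hδ0 hδ1 hδkey hC₂ hC₁ hab n
  have hLx : h ((x - t) + (1-δ)^n * ((x + t) - (x - t))) ≤ h x := by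
    apply hmono.monotone; nlinarith
  have hAS : (1/2:ℝ)^n * (h (x + t) - h (x - t)) ≤ h x - h (x - t) := by linarith
  -- right bound
  have hR := sqs_rightchain hmono hsurj hsqs hδ0 hδ1 hδkey hC₂ hC₁ hab n
  have hRx : h x ≤ h ((x + t) - (1-δ)^n * ((x + t) - (x - t))) := by
    apply hmono.monotone; nlinarith
  have hBS : (1/2:ℝ)^n * (h (x + t) - h (x - t)) ≤ h (x + t) - h x := by linarith
  constructor
  · rw [le_div_iff₀ hA]
    have h1 : (1/2:ℝ)^n * (h x - h (x - t)) ≤ (1/2:ℝ)^n * (h (x + t) - h (x - t)) :=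
      mul_le_mul_of_nonneg_left (by linarith) hhalf.le
    have h2 : 1 / (2:ℝ)^n = (1/2:ℝ)^n := by rw [div_pow]; norm_num
    rw [h2]; linarith
  · rw [div_le_iff₀ hA]
    have h1 := mul_le_mul_of_nonneg_left hAS hpow2.le
    rw [← mul_assoc, mul_comm ((2:ℝ)^n) ((1/2:ℝ)^n), hprod, one_mul] at h1
    linarith
end
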